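/- arXiv:1109.3227 — 5 statements merged into one kernel-verified Lean document; each statement's English description precedes it below -/
import Mathlib

section
/- Let λ₁, λ₂ ∈ ℝ, let Λ = diag(λ₁, λ₂), and let f₁, f₂ ∈ ℂ² be the two columns of ΛG, where G is the Golden Code generation matrix. Then f₂ᴴ f₁ = Σ_{u=1}^{2} conj(f_{u,2})·f_{u,1} = (α−β)(λ₁²−λ₂²)/5; in particular this inner product is a real number. -/
open Matrix Complex

noncomputable def goldenAlpha : ℝ := (1 + Real.sqrt 5) / 2

noncomputable def goldenBeta : ℝ := (1 - Real.sqrt 5) / 2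

/-- The Golden Code generation matrix `G = (1/√5)[[1+iβ, α−i],[1+iα, β−i]]`. -/
noncomputable def goldenG : Matrix (Fin 2) (Fin 2) ℂ :=
  (1 / (Real.sqrt 5 : ℂ)) •
    !![1 + Complex.I * (goldenBeta : ℂ), (goldenAlpha : ℂ) - Complex.I;
       1 + Complex.I * (goldenAlpha : ℂ), (goldenBeta : ℂ) - Complex.I]

/-- For `Λ = diag(λ₁,λ₂)` and `f₁, f₂` the columns of `ΛG`, the inner product
`f₂ᴴ f₁ = Σ_u conj(f_{u,2}) f_{u,1}` equals `(α−β)(λ₁²−λ₂²)/5`; in particular it is real. -/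
theorem stmt7 (lam₁ lam₂ : ℝ)
    (A : Matrix (Fin 2) (Fin 2) ℂ)
    (hA : A = Matrix.diagonal ![(lam₁ : ℂ), (lam₂ : ℂ)] * goldenG) :
    (∑ u : Fin 2, (starRingEnd ℂ) (A u 1) * A u 0) =
        (((goldenAlpha - goldenBeta) * (lam₁ ^ 2 - lam₂ ^ 2) / 5 : ℝ) : ℂ) ∧
    (∑ u : Fin 2, (starRingEnd ℂ) (A u 1) * A u 0).im = 0 := by
  have h5 : Real.sqrt 5 ^ 2 = 5 := Real.sq_sqrt (by norm_num)
  have key : (∑ u : Fin 2, (starRingEnd ℂ) (A u 1) * A u 0) =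
      (((goldenAlpha - goldenBeta) * (lam₁ ^ 2 - lam₂ ^ 2) / 5 : ℝ) : ℂ) := by
    subst hA
    simp [goldenG, goldenAlpha, goldenBeta, Matrix.mul_apply, Fin.sum_univ_two,
      Matrix.diagonal, Complex.ext_iff, div_eq_mul_inv, ← Complex.ofReal_pow]
    constructor
    · linear_combination (Real.sqrt 5 * (lam₁ ^ 2 - lam₂ ^ 2) / 25) * h5
    · linear_combination ((lam₁ ^ 2 + lam₂ ^ 2) / 20 - (lam₁ ^ 2 + lam₂ ^ 2) * (Real.sqrt 5 ^ 2 + 5) / 100) * h5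
  exact ⟨key, by rw [key]; exact Complex.ofReal_im _⟩
end

section
/- Let λ₁, λ₂ > 0 and Λ = diag(λ₁, λ₂), and let G be the Golden Code generation matrix. Then there exist a unitary 2×2 complex matrix Q and an upper triangular 2×2 matrix R all of whose entries are real, with positive diagonal entries, such that ΛG = Q·R. -/
open Matrix Complex

set_option maxHeartbeats 2000000 in
lemma keyM (lam₁ lam₂ r1 r12 r2 : ℝ) (hr1pos : 0 < r1)
    (hr1sq : r1 ^ 2 = (lam₁^2*(1+goldenBeta^2) + lam₂^2*(1+goldenAlpha^2))/5)
    (hr12 : r12 = (lam₁^2 - lam₂^2)/(Real.sqrt 5*r1))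
    (hr2 : r2 = lam₁*lam₂/r1) :
    (Matrix.diagonal ![(lam₁ : ℂ), (lam₂ : ℂ)] * goldenG)ᴴ *
      (Matrix.diagonal ![(lam₁ : ℂ), (lam₂ : ℂ)] * goldenG) =
    (!![(r1:ℂ), (r12:ℂ); 0, (r2:ℂ)])ᴴ * !![(r1:ℂ), (r12:ℂ); 0, (r2:ℂ)] := by
  have ht5 : Real.sqrt 5 ^ 2 = 5 := Real.sq_sqrt (by norm_num)
  have htpos : 0 < Real.sqrt 5 := Real.sqrt_pos.mpr (by norm_num)
  have ht0 : Real.sqrt 5 ≠ 0 := ne_of_gt htpos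
  have hr10 : r1 ≠ 0 := ne_of_gt hr1pos
  have ht3 : Real.sqrt 5 ^ 3 = 5 * Real.sqrt 5 := by nlinarith [ht5]
  have h0 : (0:ℝ) < 5 := by norm_num
  have ht4 : Real.sqrt 5 ^ 4 = 25 := by nlinarith [ht5]
  have ht5' : Real.sqrt 5 ^ 5 = 25 * Real.sqrt 5 := by nlinarith [ht5, ht3]
  have ht6 : Real.sqrt 5 ^ 6 = 125 := by nlinarith [ht5, ht4]
  have ht7 : Real.sqrt 5 ^ 7 = 125 * Real.sqrt 5 := by nlinarith [ht5, ht6, ht3]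
  have ht8 : Real.sqrt 5 ^ 8 = 625 := by nlinarith [ht4]
  have ht9 : Real.sqrt 5 ^ 9 = 625 * Real.sqrt 5 := by nlinarith [ht8, ht5, ht7]
  have ht10 : Real.sqrt 5 ^ 10 = 3125 := by nlinarith [ht8, ht5]
  simp only [goldenAlpha, goldenBeta] at hr1sq
  subst hr12 hr2
  ext i j
  fin_cases i <;> fin_cases j <;>
  · simp only [goldenG, goldenAlpha, goldenBeta, Matrix.mul_apply, Fin.sum_univ_two,
      Matrix.conjTranspose_apply, Matrix.smul_apply, Matrix.cons_val_zero, Matrix.cons_val_one,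
      Matrix.head_cons, Matrix.head_fin_const, Matrix.diagonal_mul, Matrix.of_apply,
      Matrix.cons_val', Matrix.empty_val', Matrix.cons_val_fin_one]
    rw [Complex.ext_iff]
    constructor <;>
    · simp [Complex.add_re, Complex.add_im, Complex.mul_re, Complex.mul_im,
        Complex.div_re, Complex.div_im, Complex.normSq, Matrix.diagonal]
      try simp only [← Complex.ofReal_pow, Complex.ofReal_re, Complex.ofReal_im]
      try field_simp
      try ring_nf
      try simp only [ht10, ht9, ht8, ht7, ht6, ht5', ht4, ht3, ht5]
      try ring_nf
      try simp only [show r1^8=(r1^2)^4 from by ring, show r1^6=(r1^2)^3 from by ring,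
        show r1^4=(r1^2)^2 from by ring, hr1sq]
      try ring_nf
      try simp only [ht10, ht9, ht8, ht7, ht6, ht5', ht4, ht3, ht5]
      try ring_nf
      try nlinarith [ht5, ht3, htpos, hr1pos, hr1sq, sq_nonneg lam₁, sq_nonneg lam₂]

lemma unitary_aux (A R : Matrix (Fin 2) (Fin 2) ℂ) (hM : Aᴴ * A = Rᴴ * R)
    (hRRi : R * R⁻¹ = 1) : (A * R⁻¹)ᴴ * (A * R⁻¹) = 1 := by
  calc (A * R⁻¹)ᴴ * (A * R⁻¹)
      = R⁻¹ᴴ * (Aᴴ * (A * R⁻¹)) := by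
        rw [Matrix.conjTranspose_mul, Matrix.mul_assoc]
    _ = R⁻¹ᴴ * ((Aᴴ * A) * R⁻¹) := by rw [Matrix.mul_assoc]
    _ = R⁻¹ᴴ * ((Rᴴ * R) * R⁻¹) := by rw [hM]
    _ = R⁻¹ᴴ * (Rᴴ * (R * R⁻¹)) := by rw [Matrix.mul_assoc]
    _ = R⁻¹ᴴ * Rᴴ := by rw [hRRi, Matrix.mul_one]
    _ = (R * R⁻¹)ᴴ := by rw [Matrix.conjTranspose_mul]
    _ = 1 := by rw [hRRi, Matrix.conjTranspose_one]

/-- For `λ₁, λ₂ > 0` and `Λ = diag(λ₁,λ₂)`, there is a QR decomposition `ΛG = QR`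
with `Q` unitary and `R` upper triangular with real entries and positive diagonal. -/
theorem stmt8 (lam₁ lam₂ : ℝ) (h₁ : 0 < lam₁) (h₂ : 0 < lam₂) :
    ∃ Q R : Matrix (Fin 2) (Fin 2) ℂ,
      Qᴴ * Q = 1 ∧
      (∀ u w : Fin 2, w < u → R u w = 0) ∧
      (∀ u w : Fin 2, (R u w).im = 0) ∧
      (∀ u : Fin 2, 0 < (R u u).re) ∧
      Matrix.diagonal ![(lam₁ : ℂ), (lam₂ : ℂ)] * goldenG = Q * R := by
  have htpos : 0 < Real.sqrt 5 := Real.sqrt_pos.mpr (by norm_num)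
  have hr1sqpos : 0 < (lam₁^2*(1+goldenBeta^2) + lam₂^2*(1+goldenAlpha^2))/5 := by
    positivity
  set r1 : ℝ := Real.sqrt ((lam₁^2*(1+goldenBeta^2) + lam₂^2*(1+goldenAlpha^2))/5) with hr1
  have hr1pos : 0 < r1 := Real.sqrt_pos.mpr hr1sqpos
  have hr1sq : r1 ^ 2 = (lam₁^2*(1+goldenBeta^2) + lam₂^2*(1+goldenAlpha^2))/5 :=
    Real.sq_sqrt hr1sqpos.le
  set r12 : ℝ := (lam₁^2 - lam₂^2)/(Real.sqrt 5*r1) with hr12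
  set r2 : ℝ := lam₁*lam₂/r1 with hr2
  have hr2pos : 0 < r2 := by rw [hr2]; positivity
  set R : Matrix (Fin 2) (Fin 2) ℂ := !![(r1:ℂ), (r12:ℂ); 0, (r2:ℂ)] with hR
  set A : Matrix (Fin 2) (Fin 2) ℂ := Matrix.diagonal ![(lam₁ : ℂ), (lam₂ : ℂ)] * goldenG
    with hA
  have hdetR : R.det = ((r1*r2 : ℝ) : ℂ) := by
    rw [hR, Matrix.det_fin_two_of]
    push_cast; ring
  have hRinv : IsUnit R.det := by
    rw [hdetR]
    simp only [isUnit_iff_ne_zero, ne_eq, Complex.ofReal_eq_zero]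
    positivity
  have hRR : R⁻¹ * R = 1 := Matrix.nonsing_inv_mul R hRinv
  have hRRi : R * R⁻¹ = 1 := Matrix.mul_nonsing_inv R hRinv
  refine ⟨A * R⁻¹, R, ?_, ?_, ?_, ?_, ?_⟩
  · have hM : Aᴴ * A = Rᴴ * R := by
      rw [hA, hR]
      exact keyM lam₁ lam₂ r1 r12 r2 hr1pos hr1sq hr12 hr2
    exact unitary_aux A R hM hRRi
  · intro u w hw
    fin_cases u <;> fin_cases w <;> simp_all [hR]
  · intro u w
    fin_cases u <;> fin_cases w <;> simp [hR]
  · intro u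
    fin_cases u <;> simp [hR] <;> assumption
  · rw [Matrix.mul_assoc, hRR, Matrix.mul_one]
end

section
/- Let d₁, d₂ be Gaussian integers (elements of ℤ[i] ⊂ ℂ) not both zero. Then (1+iβ)·d₁ + (α−i)·d₂ ≠ 0 and (1+iα)·d₁ + (β−i)·d₂ ≠ 0, where α = (1+√5)/2 and β = (1−√5)/2. Consequently each row of the Golden Code generation matrix has nonzero inner product with every nonzero vector whose entries are Gaussian integers. -/
open Matrix Complex

/-- `z ∈ ℂ` is a Gaussian integer if `z = a + b·i` with `a, b ∈ ℤ`. -/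
def IsGaussianInt (z : ℂ) : Prop := ∃ a b : ℤ, z = (a : ℂ) + (b : ℂ) * Complex.I

lemma sqrt5_lin (p q : ℤ) (h : (p : ℝ) + q * Real.sqrt 5 = 0) : p = 0 ∧ q = 0 := by
  have hirr : Irrational (Real.sqrt 5) := by
    have : Nat.Prime 5 := by norm_num
    exact this.irrational_sqrt
  by_cases hq : q = 0
  · subst hq; simp at h; exact ⟨by exact_mod_cast h, rfl⟩
  · exfalso
    apply hirr
    refine ⟨(-p / q : ℚ), ?_⟩
    have hq' : (q : ℝ) ≠ 0 := Int.cast_ne_zero.mpr hq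
    push_cast
    field_simp
    linarith

lemma row_ne (s : ℝ) (hs : ∀ p q : ℤ, (p : ℝ) + q * s = 0 → p = 0 ∧ q = 0)
    (a b c d : ℤ) (hnz : ¬(a = 0 ∧ b = 0 ∧ c = 0 ∧ d = 0)) :
    (1 + Complex.I * (((1 - s) / 2 : ℝ) : ℂ)) * ((a : ℂ) + b * Complex.I) +
      ((((1 + s) / 2 : ℝ) : ℂ) - Complex.I) * ((c : ℂ) + d * Complex.I) ≠ 0 := by
  intro heq
  have hre : ((a : ℝ) - (1 - s) / 2 * b + (1 + s) / 2 * c + d) = 0 := by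
    have := congrArg Complex.re heq
    simp [Complex.add_re, Complex.mul_re, Complex.mul_im] at this
    linarith [this]
  have him : ((b : ℝ) + (1 - s) / 2 * a + (1 + s) / 2 * d - c) = 0 := by
    have := congrArg Complex.im heq
    simp [Complex.add_im, Complex.mul_re, Complex.mul_im] at this
    linarith [this]
  have e1 := hs (2 * a + 2 * d - b + c) (b + c) (by push_cast; linarith [hre])
  have e2 := hs (2 * b - 2 * c + a + d) (d - a) (by push_cast; linarith [him])
  apply hnz
  omega

/-- For Gaussian integers `d₁, d₂` not both zero, `(1+iβ)d₁ + (α−i)d₂ ≠ 0` and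
`(1+iα)d₁ + (β−i)d₂ ≠ 0`; consequently each row of the Golden Code generation matrix
has nonzero inner product with the nonzero Gaussian-integer vector `(d₁, d₂)`. -/
theorem stmt9 (d₁ d₂ : ℂ) (h₁ : IsGaussianInt d₁) (h₂ : IsGaussianInt d₂)
    (h : ¬(d₁ = 0 ∧ d₂ = 0)) :
    ((1 + Complex.I * (goldenBeta : ℂ)) * d₁ + ((goldenAlpha : ℂ) - Complex.I) * d₂ ≠ 0 ∧
     (1 + Complex.I * (goldenAlpha : ℂ)) * d₁ + ((goldenBeta : ℂ) - Complex.I) * d₂ ≠ 0) ∧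
    ∀ u : Fin 2, goldenG.mulVec ![d₁, d₂] u ≠ 0 := by
  obtain ⟨a, b, rfl⟩ := h₁
  obtain ⟨c, d, rfl⟩ := h₂
  have hnz : ¬(a = 0 ∧ b = 0 ∧ c = 0 ∧ d = 0) := by
    intro ⟨ha, hb, hc, hd⟩
    exact h (by subst ha hb hc hd; simp)
  have hs5 : ∀ p q : ℤ, (p : ℝ) + q * Real.sqrt 5 = 0 → p = 0 ∧ q = 0 := sqrt5_lin
  have hs5' : ∀ p q : ℤ, (p : ℝ) + q * (-Real.sqrt 5) = 0 → p = 0 ∧ q = 0 := by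
    intro p q hpq
    have := sqrt5_lin p (-q) (by push_cast; linarith)
    exact ⟨this.1, by omega⟩
  have key1 := row_ne (Real.sqrt 5) hs5 a b c d hnz
  have key2 := row_ne (-Real.sqrt 5) hs5' a b c d hnz
  have hb1 : goldenBeta = (1 - Real.sqrt 5) / 2 := rfl
  have ha1 : goldenAlpha = (1 + Real.sqrt 5) / 2 := rfl
  have hb2 : goldenAlpha = (1 - (-Real.sqrt 5)) / 2 := by rw [ha1]; ring
  have ha2 : goldenBeta = (1 + (-Real.sqrt 5)) / 2 := by rw [hb1]; ring
  have K1 : (1 + Complex.I * (goldenBeta : ℂ)) * ((a : ℂ) + b * Complex.I) +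
      ((goldenAlpha : ℂ) - Complex.I) * ((c : ℂ) + d * Complex.I) ≠ 0 := by
    rw [hb1, ha1]; exact key1
  have K2 : (1 + Complex.I * (goldenAlpha : ℂ)) * ((a : ℂ) + b * Complex.I) +
      ((goldenBeta : ℂ) - Complex.I) * ((c : ℂ) + d * Complex.I) ≠ 0 := by
    rw [hb2, ha2]; exact key2
  refine ⟨⟨K1, K2⟩, ?_⟩
  intro u
  have hsqrt : (Real.sqrt 5 : ℂ) ≠ 0 := by
    rw [Complex.ofReal_ne_zero]
    positivity
  have hmul : ∀ z : ℂ, z ≠ 0 → 1 / (Real.sqrt 5 : ℂ) * z ≠ 0 := by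
    intro z hz
    exact mul_ne_zero (one_div_ne_zero hsqrt) hz
  fin_cases u <;>
    simp only [goldenG, Matrix.mulVec, Matrix.smul_apply, Matrix.cons_val_zero,
      Matrix.cons_val_one, Matrix.head_cons, Matrix.of_apply, dotProduct,
      Fin.sum_univ_two, Matrix.cons_val', Matrix.empty_val', Matrix.cons_val_fin_one,
      smul_eq_mul, Fin.mk_zero, Fin.mk_one, Fin.isValue, Matrix.vecHead, Matrix.vecTail]
  · intro hc0; exact hmul _ K1 (by rw [← hc0]; ring)
  · intro hc0; exact hmul _ K2 (by rw [← hc0]; ring)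
end

section
/- Let x₁, x₂, x̂₁, x̂₂ ∈ ℂ² be vectors all of whose entries are Gaussian integers, with (x₁, x₂) ≠ (x̂₁, x̂₂). Then ρ₁ := Σ_{v=1}^{2} |g₁ᵀ(x_v − x̂_v)|² > 0, where g₁ᵀ = (1/√5)(1+iβ, α−i) is the first row of the Golden Code generation matrix. -/
open Complex

/-- The dot product of the first row `g₁ᵀ = (1/√5)(1+iβ, α−i)` of the
Golden Code generation matrix with a vector `d ∈ ℂ²`. -/
noncomputable def g1dot (d : Fin 2 → ℂ) : ℂ :=
  (1 / (Real.sqrt 5 : ℂ)) *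
    ((1 + Complex.I * (goldenBeta : ℂ)) * d 0 + ((goldenAlpha : ℂ) - Complex.I) * d 1)

/- Clearing the factor 1/√5, g₁ᵀd = 0 splits into a real and an imaginary equation, each of the
form p + q√5 = 0 with p, q ∈ ℤ linear in the four integer coordinates of d. Irrationality of √5
forces p = q = 0, and the resulting four integer equations only have the zero solution. -/

theorem Irrational.intCast_add_intCast_mul_eq_zero {x : ℝ} (hx : Irrational x) {p q : ℤ}
    (h : (p : ℝ) + q * x = 0) : p = 0 ∧ q = 0 := by
  obtain rfl | hq := eq_or_ne q 0
  · exact ⟨by simpa using h, rfl⟩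
  · exact absurd h ((hx.intCast_mul hq).intCast_add p).ne_zero

theorem IsGaussianInt.sub {z w : ℂ} (hz : IsGaussianInt z) (hw : IsGaussianInt w) :
    IsGaussianInt (z - w) := by
  obtain ⟨a, b, rfl⟩ := hz
  obtain ⟨c, e, rfl⟩ := hw
  exact ⟨a - c, b - e, by push_cast; ring⟩

theorem IsGaussianInt.eq_zero_of_golden_combination_eq_zero {z w : ℂ} (hz : IsGaussianInt z)
    (hw : IsGaussianInt w)
    (h : (1 + Complex.I * (goldenBeta : ℂ)) * z + ((goldenAlpha : ℂ) - Complex.I) * w = 0) :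
    z = 0 ∧ w = 0 := by
  obtain ⟨a, b, rfl⟩ := hz
  obtain ⟨c, e, rfl⟩ := hw
  have hre := congrArg Complex.re h
  have him := congrArg Complex.im h
  simp only [goldenAlpha, goldenBeta, add_re, add_im, mul_re, mul_im, sub_re, sub_im, one_re,
    one_im, I_re, I_im, ofReal_re, ofReal_im, intCast_re, intCast_im, zero_re, zero_im] at hre him
  have hsqrt5 : Irrational (Real.sqrt 5) := by exact_mod_cast Nat.prime_five.irrational_sqrt
  obtain ⟨h₁, h₂⟩ := hsqrt5.intCast_add_intCast_mul_eq_zero (p := 2 * a - b + c + 2 * e)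
    (q := b + c) (by push_cast; linear_combination 2 * hre)
  obtain ⟨h₃, h₄⟩ := hsqrt5.intCast_add_intCast_mul_eq_zero (p := a + 2 * b - 2 * c + e)
    (q := e - a) (by push_cast; linear_combination 2 * him)
  obtain ⟨rfl, rfl, rfl, rfl⟩ : a = 0 ∧ b = 0 ∧ c = 0 ∧ e = 0 := by omega
  simp

theorem g1dot_ne_zero {d : Fin 2 → ℂ} (hd : ∀ u, IsGaussianInt (d u)) (hd₀ : d ≠ 0) :
    g1dot d ≠ 0 := by
  intro h
  have hsqrt5 : (Real.sqrt 5 : ℂ) ≠ 0 := by exact_mod_cast (Real.sqrt_pos.mpr (by norm_num)).ne'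
  obtain ⟨h₀, h₁⟩ := (hd 0).eq_zero_of_golden_combination_eq_zero (hd 1)
    (by simpa [g1dot, hsqrt5] using h)
  exact hd₀ (funext fun u => by fin_cases u <;> assumption)

/-- For Gaussian-integer vectors `x₁, x₂, x̂₁, x̂₂` with `(x₁,x₂) ≠ (x̂₁,x̂₂)`,
`ρ₁ = Σ_{v=1}^{2} |g₁ᵀ(x_v − x̂_v)|² > 0`. -/
theorem stmt10 (x₁ x₂ xh₁ xh₂ : Fin 2 → ℂ)
    (hx₁ : ∀ u, IsGaussianInt (x₁ u)) (hx₂ : ∀ u, IsGaussianInt (x₂ u))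
    (hxh₁ : ∀ u, IsGaussianInt (xh₁ u)) (hxh₂ : ∀ u, IsGaussianInt (xh₂ u))
    (hne : ¬(x₁ = xh₁ ∧ x₂ = xh₂)) :
    0 < ‖g1dot (x₁ - xh₁)‖ ^ 2 + ‖g1dot (x₂ - xh₂)‖ ^ 2 := by
  rcases not_and_or.mp hne with h | h
  · have h₁ := g1dot_ne_zero (fun u => (hx₁ u).sub (hxh₁ u)) (sub_ne_zero.mpr h)
    positivity
  · have h₂ := g1dot_ne_zero (fun u => (hx₂ u).sub (hxh₂ u)) (sub_ne_zero.mpr h)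
    positivity
end

section
/- Let θ ∈ ℝ satisfy θ⁴ − θ³ − 4θ² + 4θ + 1 = 0, and define the complex numbers c₁ = 1 + i(θ²−3), c₂ = θ + i(θ³−3θ), c₃ = (θ³−3θ) + i(−1+4θ−θ³), c₄ = (−1−3θ+θ²+θ³) + i. Then for all a, b ∈ {1,2,3,4}, the product conj(c_a)·c_b is a real number. -/
open Complex

set_option maxHeartbeats 1000000

/-- If `θ ∈ ℝ` satisfies `θ⁴ − θ³ − 4θ² + 4θ + 1 = 0` and
`c₁ = 1 + i(θ²−3)`, `c₂ = θ + i(θ³−3θ)`, `c₃ = (θ³−3θ) + i(−1+4θ−θ³)`,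
`c₄ = (−1−3θ+θ²+θ³) + i`, then `conj(c_a)·c_b` is real for all `a, b`. -/
theorem stmt12 (θ : ℝ) (hθ : θ ^ 4 - θ ^ 3 - 4 * θ ^ 2 + 4 * θ + 1 = 0)
    (c : Fin 4 → ℂ)
    (hc : c = ![1 + Complex.I * ((θ : ℂ) ^ 2 - 3),
                (θ : ℂ) + Complex.I * ((θ : ℂ) ^ 3 - 3 * (θ : ℂ)),
                ((θ : ℂ) ^ 3 - 3 * (θ : ℂ)) + Complex.I * (-1 + 4 * (θ : ℂ) - (θ : ℂ) ^ 3),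
                (-1 - 3 * (θ : ℂ) + (θ : ℂ) ^ 2 + (θ : ℂ) ^ 3) + Complex.I]) :
    ∀ a b : Fin 4, ((starRingEnd ℂ) (c a) * c b).im = 0 := by
  subst hc
  intro a b
  fin_cases a <;> fin_cases b <;>
    simp [Complex.mul_im, Complex.add_im, Complex.add_re, Complex.mul_re,
      Complex.I_re, Complex.I_im, Complex.ofReal_re, Complex.ofReal_im,
      ← Complex.ofReal_pow] <;>
    (try ring_nf) <;>
    (first
      | ring1
      | linear_combination (-1 - θ) * hθ
      | linear_combination (-2 - θ) * hθ
      | linear_combination (-θ - θ^2) * hθ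
      | linear_combination (-2*θ - θ^2) * hθ
      | linear_combination (1 + θ) * hθ
      | linear_combination (θ + θ^2) * hθ
      | linear_combination (-1 + 2*θ + θ^2) * hθ
      | linear_combination (2 + θ) * hθ
      | linear_combination (2*θ + θ^2) * hθ
      | linear_combination (1 - 2*θ - θ^2) * hθ)
end
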